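/- arXiv:1707.07644 — 3 statements merged into one kernel-verified Lean document; each statement's English description precedes it below -/
import Mathlib

section
/- Let I : [0, T) → ℝ be twice differentiable with I(t) > 0, and suppose there is α > 0 with I''(t)I(t) − (1+α)(I'(t))² > 0 for all t, and I'(0) > 0. Then with ã := I'(0)/I(0)^{α+1}, one has I(t)^α > I(0)^α / (1 − I(0)^α α ã t) for all t in the domain, and hence I(t) → ∞ as t → (1/(I(0)^α α ã))⁻; in particular T ≤ 1/(I(0)^α α ã). -/
open Set

/-!
Put `f = I' / I^(1+α)`. Its derivative is `(I''I − (1+α)I'²) / I^(α+2) > 0`, so `f` increases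
from `f 0 = ã`. Since `(I^(-α))' = -α f`, the function `I^(-α) + α ã t` is strictly decreasing,
i.e. `0 < I(t)^(-α) < I(0)^(-α) − α ã t`. Inverting gives the lower bound for `I^α`, and the
positivity of the right-hand side on `(0, T)` forces `T ≤ 1 / (I(0)^α α ã)`.
-/

lemma strictMonoOn_Ico_of_hasDerivAt_pos {f f' : ℝ → ℝ} {a b : ℝ}
    (hf : ∀ x ∈ Ico a b, HasDerivAt f (f' x) x) (hf' : ∀ x ∈ Ioo a b, 0 < f' x) :
    StrictMonoOn f (Ico a b) :=
  strictMonoOn_of_deriv_pos (convex_Ico a b)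
    (fun x hx => (hf x hx).continuousAt.continuousWithinAt)
    (fun x hx => by
      rw [interior_Ico] at hx
      rw [(hf x (Ioo_subset_Ico_self hx)).deriv]
      exact hf' x hx)

lemma strictAntiOn_Ico_of_hasDerivAt_neg {f f' : ℝ → ℝ} {a b : ℝ}
    (hf : ∀ x ∈ Ico a b, HasDerivAt f (f' x) x) (hf' : ∀ x ∈ Ioo a b, f' x < 0) :
    StrictAntiOn f (Ico a b) := fun _ hx _ hy hxy =>
  neg_lt_neg_iff.mp <| strictMonoOn_Ico_of_hasDerivAt_pos (f' := fun x => -f' x)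
    (fun x hx => (hf x hx).neg) (fun x hx => neg_pos.mpr (hf' x hx)) hx hy hxy

lemma hasDerivAt_div_rpow_add_one {u v : ℝ → ℝ} {w β t : ℝ} (hu : HasDerivAt u (v t) t)
    (hv : HasDerivAt v w t) (hpos : 0 < u t) :
    HasDerivAt (fun s => v s / u s ^ (β + 1))
      ((w * u t - (1 + β) * v t ^ 2) / u t ^ (β + 2)) t := by
  refine (hv.div (hu.rpow_const (p := β + 1) (Or.inl hpos.ne'))
    (Real.rpow_pos_of_pos hpos _).ne').congr_deriv ?_
  rw [show β + 2 = β + 1 + 1 by ring, Real.rpow_add_one hpos.ne' (β + 1), add_sub_cancel_right,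
    Real.rpow_add_one hpos.ne' β]
  have := (Real.rpow_pos_of_pos hpos β).ne'
  field_simp
  ring

lemma hasDerivAt_rpow_neg {u : ℝ → ℝ} {u' β t : ℝ} (hu : HasDerivAt u u' t) (hpos : 0 < u t) :
    HasDerivAt (fun s => u s ^ (-β)) (-β * (u' / u t ^ (β + 1))) t := by
  refine (hu.rpow_const (p := -β) (Or.inl hpos.ne')).congr_deriv ?_
  rw [show -β - 1 = -(β + 1) by ring, Real.rpow_neg hpos.le]
  ring

lemma one_sub_mul_pos_and_div_lt {p x s : ℝ} (hp : 0 < p) (hx : 0 < x) (h : x⁻¹ < p⁻¹ - s) :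
    0 < 1 - p * s ∧ p / (1 - p * s) < x := by
  have hrhs : 0 < p⁻¹ - s := (inv_pos.mpr hx).trans h
  have heq : 1 - p * s = p * (p⁻¹ - s) := by field_simp
  refine ⟨heq ▸ mul_pos hp hrhs, ?_⟩
  rw [heq, div_mul_cancel_left₀ hp.ne']
  simpa using inv_strictAnti₀ (inv_pos.mpr hx) h

lemma le_one_div_of_forall_pos_one_sub_mul {T c : ℝ} (hc : 0 < c)
    (h : ∀ t ∈ Ioo 0 T, 0 < 1 - c * t) : T ≤ 1 / c := by
  by_contra! hT
  have := h (1 / c) ⟨by positivity, hT⟩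
  rw [mul_one_div_cancel hc.ne', sub_self] at this
  exact lt_irrefl 0 this

/-- Levine-type concavity blow-up lemma: if `I > 0` is `C²` on `[0,T)`,
`I''I − (1+α)(I')² > 0` there, and `I'(0) > 0`, then with
`ã = I'(0)/I(0)^{α+1}` one has `I(t)^α > I(0)^α/(1 − I(0)^α α ã t)` on `(0,T)`,
and `T ≤ 1/(I(0)^α α ã)`. -/
theorem concavity_blowup (T α : ℝ) (hT : 0 < T) (hα : 0 < α) (I : ℝ → ℝ)
    (hd1 : ∀ t ∈ Ico 0 T, DifferentiableAt ℝ I t)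
    (hd2 : ∀ t ∈ Ico 0 T, DifferentiableAt ℝ (deriv I) t)
    (hpos : ∀ t ∈ Ico 0 T, 0 < I t)
    (hconc : ∀ t ∈ Ico 0 T, 0 < deriv (deriv I) t * I t - (1 + α) * (deriv I t) ^ 2)
    (hI'0 : 0 < deriv I 0) :
    (∀ t ∈ Ioo 0 T,
      I 0 ^ α / (1 - I 0 ^ α * α * (deriv I 0 / I 0 ^ (α + 1)) * t) < I t ^ α) ∧
    T ≤ 1 / (I 0 ^ α * α * (deriv I 0 / I 0 ^ (α + 1))) := by
  have h0 : (0 : ℝ) ∈ Ico 0 T := ⟨le_rfl, hT⟩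
  set a := deriv I 0 / I 0 ^ (α + 1)
  have hf : StrictMonoOn (fun s => deriv I s / I s ^ (α + 1)) (Ico 0 T) :=
    strictMonoOn_Ico_of_hasDerivAt_pos
      (fun t ht => hasDerivAt_div_rpow_add_one (hd1 t ht).hasDerivAt (hd2 t ht).hasDerivAt
        (hpos t ht))
      (fun t ht => div_pos (hconc t (Ioo_subset_Ico_self ht))
        (Real.rpow_pos_of_pos (hpos t (Ioo_subset_Ico_self ht)) _))
  have hg : StrictAntiOn (fun s => I s ^ (-α) + α * a * s) (Ico 0 T) :=
    strictAntiOn_Ico_of_hasDerivAt_neg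
      (fun t ht => (hasDerivAt_rpow_neg (hd1 t ht).hasDerivAt (hpos t ht)).add
        ((hasDerivAt_id t).const_mul (α * a)))
      (fun t ht => by
        have := mul_lt_mul_of_pos_left (hf h0 (Ioo_subset_Ico_self ht) ht.1) hα
        simp only [mul_one]
        linarith)
  have hbound : ∀ t ∈ Ioo 0 T,
      0 < 1 - I 0 ^ α * (α * a * t) ∧ I 0 ^ α / (1 - I 0 ^ α * (α * a * t)) < I t ^ α := by
    intro t ht
    have hIt := hpos t (Ioo_subset_Ico_self ht)
    apply one_sub_mul_pos_and_div_lt (Real.rpow_pos_of_pos (hpos 0 h0) α)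
      (Real.rpow_pos_of_pos hIt α)
    have := hg h0 (Ioo_subset_Ico_self ht) ht.1
    simp only [Real.rpow_neg (hpos 0 h0).le, Real.rpow_neg hIt.le, mul_zero, add_zero] at this
    linarith
  have hc : 0 < I 0 ^ α * α * a :=
    mul_pos (mul_pos (Real.rpow_pos_of_pos (hpos 0 h0) α) hα)
      (div_pos hI'0 (Real.rpow_pos_of_pos (hpos 0 h0) _))
  simp only [← mul_assoc] at hbound
  exact ⟨fun t ht => (hbound t ht).2,
    le_one_div_of_forall_pos_one_sub_mul hc fun t ht => (hbound t ht).1⟩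
end

section
/- Let f(y) = ½y − (1/2*)C^{2*}y^{2*/2} as above and let e : (−∞, E(W)] → [‖∇W‖²_{L²}, ∞) be the inverse of f restricted to [‖∇W‖²_{L²}, ∞). Then e is strictly decreasing, and g(E) := (2/(d−2))(e(E) − dE) satisfies g(E(W)) = 0, g(E) > 0 for E < E(W), and g'(E) < −2* for E < E(W). -/
/-!
With `K = C^{2*}`, the choice `C = ‖∇W‖^{-2/d}` makes `K (‖∇W‖²)^{2*/2 - 1} = 1`, so `‖∇W‖²` is
the critical point of `f`: beyond it `f'(y) = (1 - K y^{2*/2 - 1}) / 2 < 0`, and `f(‖∇W‖²) = E(W)`.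
Hence `e` is a strictly decreasing inverse of `f` with `e(E(W)) = ‖∇W‖²`, differentiable with
`e' = 1 / f'(e) < 0` below `E(W)`. Since `2/(d-2) · (y - d f(y)) = y (K y^{2*/2 - 1} - 1)`, we get
`g(E) = e(E) (K e(E)^{2*/2 - 1} - 1) > 0`, and `g' = 2/(d-2) · (e' - d) < -2d/(d-2) = -2*`.
-/

open Set Filter Topology

theorem AntitoneOn.strictAntiOn_of_leftInvOn {α β : Type*} [LinearOrder α] [LinearOrder β]
    {f : β → α} {e : α → β} {s : Set β} {t : Set α} (hf : AntitoneOn f s) (he : MapsTo e t s)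
    (hinv : LeftInvOn f e t) : StrictAntiOn e t := by
  intro a ha b hb hab
  refine lt_of_not_ge fun hle ↦ ?_
  have := hf (he ha) (he hb) hle
  rw [hinv ha, hinv hb] at this
  exact hab.not_ge this

theorem StrictAntiOn.continuousAt_of_image_mem_nhds {α β : Type*} [LinearOrder α]
    [TopologicalSpace α] [OrderTopology α] [LinearOrder β] [TopologicalSpace β] [OrderTopology β]
    [DenselyOrdered β] {e : α → β} {t : Set α} {x : α} (he : StrictAntiOn e t) (ht : t ∈ 𝓝 x)
    (hs : e '' t ∈ 𝓝 (e x)) : ContinuousAt e x :=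
  StrictMonoOn.continuousAt_of_image_mem_nhds (f := OrderDual.toDual ∘ e) he.dual_right ht hs

theorem StrictAntiOn.hasDerivAt_of_leftInvOn {f e : ℝ → ℝ} {s t : Set ℝ} {x f' : ℝ}
    (he : StrictAntiOn e t) (hinv : LeftInvOn f e t) (hsurj : SurjOn e t s) (ht : t ∈ 𝓝 x)
    (hs : s ∈ 𝓝 (e x)) (hf : HasDerivAt f f' (e x)) (hf' : f' ≠ 0) : HasDerivAt e f'⁻¹ x :=
  hf.of_local_left_inverse (he.continuousAt_of_image_mem_nhds ht (mem_of_superset hs hsurj)) hf'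
    (mem_of_superset ht fun _ hy ↦ hinv hy)

/-- The paper's `f`, with `p = 2*` and `K = C^{2*}`. -/
noncomputable def energyLowerBound (p K y : ℝ) : ℝ :=
  y / 2 - 1 / p * K * y ^ (p / 2)

section energyLowerBound

variable {p K y₀ y E₀ : ℝ} {e : ℝ → ℝ}

theorem hasDerivAt_energyLowerBound (hp : p ≠ 0) (hy : y ≠ 0) :
    HasDerivAt (energyLowerBound p K) ((1 - K * y ^ (p / 2 - 1)) / 2) y := by
  have h := ((hasDerivAt_id y).div_const 2).sub
    ((Real.hasDerivAt_rpow_const (p := p / 2) (Or.inl hy)).const_mul (1 / p * K))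
  exact h.congr_deriv (by field_simp)

theorem one_lt_mul_rpow_of_lt (hp : 2 < p) (hK : 0 < K) (hy₀ : 0 < y₀)
    (hcrit : K * y₀ ^ (p / 2 - 1) = 1) (hy : y₀ < y) : 1 < K * y ^ (p / 2 - 1) := by
  calc 1 = K * y₀ ^ (p / 2 - 1) := hcrit.symm
    _ < K * y ^ (p / 2 - 1) := by gcongr; linarith

theorem energyLowerBound_strictAntiOn (hp : 2 < p) (hK : 0 < K) (hy₀ : 0 < y₀)
    (hcrit : K * y₀ ^ (p / 2 - 1) = 1) : StrictAntiOn (energyLowerBound p K) (Ici y₀) := by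
  have hderiv (y : ℝ) (hy : y₀ ≤ y) := hasDerivAt_energyLowerBound (K := K) (by positivity)
    (hy₀.trans_le hy).ne'
  refine strictAntiOn_of_deriv_neg (convex_Ici y₀)
    (fun y hy ↦ (hderiv y hy).continuousAt.continuousWithinAt) fun y hy ↦ ?_
  rw [interior_Ici] at hy
  rw [(hderiv y (le_of_lt hy)).deriv]
  linarith [one_lt_mul_rpow_of_lt hp hK hy₀ hcrit hy]

theorem energyLowerBound_of_critical (hy₀ : 0 < y₀) (hcrit : K * y₀ ^ (p / 2 - 1) = 1) :
    energyLowerBound p K y₀ = (1 / 2 - 1 / p) * y₀ := by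
  have hK : K * y₀ ^ (p / 2) = y₀ := by
    rw [Real.rpow_sub_one hy₀.ne', mul_div_assoc', div_eq_one_iff_eq hy₀.ne'] at hcrit
    exact hcrit
  rw [energyLowerBound, mul_assoc, hK]
  ring

theorem two_div_mul_sub_energyLowerBound {d : ℝ} (hd : 2 < d) (hp : p = 2 * d / (d - 2))
    (hy : 0 < y) {E : ℝ} (hE : energyLowerBound p K y = E) :
    2 / (d - 2) * (y - d * E) = y * (K * y ^ (p / 2 - 1) - 1) := by
  have hd₂ : d - 2 ≠ 0 := by linarith
  rw [← hE, energyLowerBound, Real.rpow_sub_one hy.ne', hp]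
  field_simp
  ring

theorem strictAntiOn_of_leftInvOn_energyLowerBound (hp : 2 < p) (hK : 0 < K) (hy₀ : 0 < y₀)
    (hcrit : K * y₀ ^ (p / 2 - 1) = 1) (he_maps : MapsTo e (Iic E₀) (Ici y₀))
    (he_inv : LeftInvOn (energyLowerBound p K) e (Iic E₀)) : StrictAntiOn e (Iic E₀) :=
  (energyLowerBound_strictAntiOn hp hK hy₀ hcrit).antitoneOn.strictAntiOn_of_leftInvOn he_maps
    he_inv

theorem apply_eq_of_leftInvOn_energyLowerBound (hp : 2 < p) (hK : 0 < K) (hy₀ : 0 < y₀)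
    (hcrit : K * y₀ ^ (p / 2 - 1) = 1) (hE₀ : energyLowerBound p K y₀ = E₀)
    (he_maps : MapsTo e (Iic E₀) (Ici y₀))
    (he_inv : LeftInvOn (energyLowerBound p K) e (Iic E₀)) : e E₀ = y₀ :=
  (energyLowerBound_strictAntiOn hp hK hy₀ hcrit).injOn (he_maps self_mem_Iic) self_mem_Ici
    (by rw [he_inv self_mem_Iic, hE₀])

theorem lt_apply_of_leftInvOn_energyLowerBound (hp : 2 < p) (hK : 0 < K) (hy₀ : 0 < y₀)
    (hcrit : K * y₀ ^ (p / 2 - 1) = 1) (hE₀ : energyLowerBound p K y₀ = E₀)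
    (he_maps : MapsTo e (Iic E₀) (Ici y₀))
    (he_inv : LeftInvOn (energyLowerBound p K) e (Iic E₀)) {E : ℝ} (hE : E < E₀) : y₀ < e E :=
  apply_eq_of_leftInvOn_energyLowerBound hp hK hy₀ hcrit hE₀ he_maps he_inv ▸
    strictAntiOn_of_leftInvOn_energyLowerBound hp hK hy₀ hcrit he_maps he_inv hE.le self_mem_Iic hE

theorem hasDerivAt_of_leftInvOn_energyLowerBound (hp : 2 < p) (hK : 0 < K) (hy₀ : 0 < y₀)
    (hcrit : K * y₀ ^ (p / 2 - 1) = 1) (hE₀ : energyLowerBound p K y₀ = E₀)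
    (he_maps : MapsTo e (Iic E₀) (Ici y₀))
    (he_inv : LeftInvOn (energyLowerBound p K) e (Iic E₀)) {E : ℝ} (hE : E < E₀) :
    HasDerivAt e ((1 - K * e E ^ (p / 2 - 1)) / 2)⁻¹ E := by
  have hf_anti := energyLowerBound_strictAntiOn hp hK hy₀ hcrit
  have hf_maps : MapsTo (energyLowerBound p K) (Ici y₀) (Iic E₀) := fun y hy ↦
    hE₀ ▸ hf_anti.antitoneOn self_mem_Ici hy hy
  have he_surj : SurjOn e (Iic E₀) (Ici y₀) :=
    (hf_anti.injOn.rightInvOn_of_leftInvOn he_inv hf_maps he_maps).surjOn hf_maps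
  have hy := lt_apply_of_leftInvOn_energyLowerBound hp hK hy₀ hcrit hE₀ he_maps he_inv hE
  refine (strictAntiOn_of_leftInvOn_energyLowerBound hp hK hy₀ hcrit he_maps he_inv
    ).hasDerivAt_of_leftInvOn he_inv he_surj (Iic_mem_nhds hE) (Ici_mem_nhds hy)
    (hasDerivAt_energyLowerBound (by positivity) (hy₀.trans hy).ne') ?_
  linarith [one_lt_mul_rpow_of_lt hp hK hy₀ hcrit hy]

end energyLowerBound

theorem rpow_neg_two_div_rpow_mul_sq_rpow {d N p : ℝ} (hd : 2 < d) (hN : 0 < N)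
    (hp : p = 2 * d / (d - 2)) : (N ^ (-(2 / d))) ^ p * (N ^ 2) ^ (p / 2 - 1) = 1 := by
  have hd₂ : d - 2 ≠ 0 := by linarith
  rw [show N ^ 2 = N ^ (2 : ℝ) by norm_cast, ← Real.rpow_mul hN.le, ← Real.rpow_mul hN.le,
    ← Real.rpow_add hN]
  convert Real.rpow_zero N using 2
  rw [hp]
  field_simp
  ring

theorem deriv_two_div_mul_sub_lt {d p E e' : ℝ} {e : ℝ → ℝ} (hd : 2 < d)
    (hp : p = 2 * d / (d - 2)) (he : HasDerivAt e e' E) (he' : e' < 0) :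
    deriv (fun E ↦ 2 / (d - 2) * (e E - d * E)) E < -p := by
  have hd₂ : 0 < d - 2 := by linarith
  have hg := (he.sub ((hasDerivAt_id E).const_mul d)).const_mul (2 / (d - 2))
  calc deriv (fun E ↦ 2 / (d - 2) * (e E - d * E)) E = 2 / (d - 2) * (e' - d * 1) := hg.deriv
    _ < 2 / (d - 2) * (0 - d * 1) := by gcongr
    _ = -p := by rw [hp]; ring

/-- Properties of `e`, the inverse of `f(y) = ½y − (1/2*)C^{2*}y^{2*/2}` restricted
to `[N², ∞)` (`N = ‖∇W‖_{L²}`, `E(W) = N²/d`), and of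
`g(E) = (2/(d−2))(e(E) − dE)`: `e` is strictly decreasing, `g(E(W)) = 0`,
`g(E) > 0` for `E < E(W)`, and `g'(E) < −2*` for `E < E(W)`. -/
theorem inverse_function_analysis (d : ℕ) (hd : 3 ≤ d) (N : ℝ) (hN : 0 < N)
    (p C EW : ℝ) (hp : p = 2 * d / ((d : ℝ) - 2)) (hC : C = N ^ (-(2 / (d : ℝ))))
    (hEW : EW = N ^ 2 / d)
    (f : ℝ → ℝ) (hf : ∀ y : ℝ, f y = y / 2 - (1 / p) * C ^ p * y ^ (p / 2))
    (e : ℝ → ℝ)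
    (he : ∀ E ∈ Iic EW, e E ∈ Ici (N ^ 2) ∧ f (e E) = E)
    (g : ℝ → ℝ) (hg : ∀ E : ℝ, g E = (2 / ((d : ℝ) - 2)) * (e E - d * E)) :
    StrictAntiOn e (Iic EW) ∧
    g EW = 0 ∧
    (∀ E : ℝ, E < EW → 0 < g E) ∧
    (∀ E : ℝ, E < EW → deriv g E < -p) := by
  have hd₂ : (2 : ℝ) < d := by exact_mod_cast hd
  have hp₂ : 2 < p := by
    rw [hp, lt_div_iff₀ (by linarith)]
    linarith
  have hK : 0 < C ^ p := by rw [hC]; positivity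
  have hN₂ : 0 < N ^ 2 := by positivity
  have hcrit : C ^ p * (N ^ 2) ^ (p / 2 - 1) = 1 := hC ▸ rpow_neg_two_div_rpow_mul_sq_rpow hd₂ hN hp
  have hE₀ : energyLowerBound p (C ^ p) (N ^ 2) = EW := by
    rw [energyLowerBound_of_critical hN₂ hcrit, hEW, hp]
    field_simp
    ring
  obtain rfl : f = energyLowerBound p (C ^ p) := funext hf
  have he_maps : MapsTo e (Iic EW) (Ici (N ^ 2)) := fun E hE ↦ (he E hE).1
  have he_inv : LeftInvOn (energyLowerBound p (C ^ p)) e (Iic EW) := fun E hE ↦ (he E hE).2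
  have he_gt (E : ℝ) (hE : E < EW) : N ^ 2 < e E :=
    lt_apply_of_leftInvOn_energyLowerBound hp₂ hK hN₂ hcrit hE₀ he_maps he_inv hE
  refine ⟨strictAntiOn_of_leftInvOn_energyLowerBound hp₂ hK hN₂ hcrit he_maps he_inv, ?_,
    fun E hE ↦ ?_, fun E hE ↦ ?_⟩
  · rw [hg, apply_eq_of_leftInvOn_energyLowerBound hp₂ hK hN₂ hcrit hE₀ he_maps he_inv, hEW]
    field_simp
    ring
  · have hy₀ : 0 < e E := hN₂.trans (he_gt E hE)
    rw [hg, two_div_mul_sub_energyLowerBound hd₂ hp hy₀ (he_inv hE.le)]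
    exact mul_pos hy₀ (sub_pos.2 (one_lt_mul_rpow_of_lt hp₂ hK hN₂ hcrit (he_gt E hE)))
  · rw [funext hg]
    refine deriv_two_div_mul_sub_lt hd₂ hp
      (hasDerivAt_of_leftInvOn_energyLowerBound hp₂ hK hN₂ hcrit hE₀ he_maps he_inv hE)
      (inv_lt_zero.2 ?_)
    linarith [one_lt_mul_rpow_of_lt hp₂ hK hN₂ hcrit (he_gt E hE)]
end

section
/- If u ∈ Ḣ¹(ℝᵈ) satisfies E(u) ≤ E₀ < E(W) and ‖∇u‖²_{L²} ≥ ‖∇W‖²_{L²}, then ‖∇u‖²_{L²} ≥ e(E(u)) ≥ e(E₀) > ‖∇W‖²_{L²}, and consequently −K(u) ≥ g(E(u)) > 0, where e, g are as defined from the sharp Sobolev inequality. -/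
/-!
Since the Sobolev constant is sharp, `C ^ p * (N ^ 2) ^ (p / 2 - 1) = 1`: the point `N ^ 2` is
exactly the critical point of `f`, where `f` takes its maximum `N ^ 2 / d = E(W)`, and `f` is
strictly decreasing on `[N ^ 2, ∞)`. Hence its inverse `e` there is decreasing, and the
Sobolev bound `f (‖∇u‖²) ≤ E(u)` forces `‖∇u‖² ≥ e (E(u))`. The bound on `K` follows from the
identity `-K(u) = 2 / (d - 2) * (‖∇u‖² - d * E(u))` and `d * E(u) < d * E(W) = N ^ 2 ≤ e (E(u))`.
-/

open MeasureTheory Set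

lemma strictAntiOn_half_sub_mul_rpow {p K y₀ : ℝ} (hp : 2 < p) (hK : 0 < K) (hy₀ : 0 ≤ y₀)
    (hthreshold : 1 ≤ K * y₀ ^ (p / 2 - 1)) :
    StrictAntiOn (fun y : ℝ => y / 2 - 1 / p * K * y ^ (p / 2)) (Ici y₀) := by
  have hp0 : p ≠ 0 := by positivity
  refine strictAntiOn_of_hasDerivWithinAt_neg (convex_Ici y₀)
    (f' := fun y => (1 - K * y ^ (p / 2 - 1)) / 2) ?_ (fun y hy => ?_) (fun y hy => ?_)
  · exact ((continuous_id.div_const 2).sub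
      (continuous_const.mul (Real.continuous_rpow_const (by linarith)))).continuousOn
  · rw [interior_Ici] at hy
    have hy0 : y ≠ 0 := (hy₀.trans_lt hy).ne'
    have h : HasDerivAt (fun y : ℝ => y / 2 - 1 / p * K * y ^ (p / 2))
        (1 / 2 - 1 / p * K * (p / 2 * y ^ (p / 2 - 1))) y :=
      ((hasDerivAt_id' y).div_const 2).sub
        ((Real.hasDerivAt_rpow_const (Or.inl hy0)).const_mul _)
    exact (h.congr_deriv (by field_simp)).hasDerivWithinAt
  · rw [interior_Ici] at hy
    have : y₀ ^ (p / 2 - 1) < y ^ (p / 2 - 1) := Real.rpow_lt_rpow hy₀ hy (by linarith)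
    nlinarith

lemma half_sub_mul_rpow_eq_of_mul_rpow_eq_one {p K y₀ : ℝ} (hy₀ : 0 < y₀)
    (h : K * y₀ ^ (p / 2 - 1) = 1) :
    y₀ / 2 - 1 / p * K * y₀ ^ (p / 2) = (1 / 2 - 1 / p) * y₀ := by
  have hsplit : y₀ ^ (p / 2) = y₀ ^ (p / 2 - 1) * y₀ := by
    rw [← Real.rpow_add_one hy₀.ne', sub_add_cancel]
  rw [hsplit, ← mul_assoc, mul_assoc _ K, h]
  ring

lemma rpow_neg_two_div_rpow_mul_sq_rpow_eq_one {d p N : ℝ} (hN : 0 < N) (hd : d ≠ 0)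
    (hd₂ : d - 2 ≠ 0) (hp : p = 2 * d / (d - 2)) :
    (N ^ (-(2 / d))) ^ p * (N ^ 2) ^ (p / 2 - 1) = 1 := by
  rw [← Real.rpow_natCast, ← Real.rpow_mul hN.le, ← Real.rpow_mul hN.le, ← Real.rpow_add hN]
  convert Real.rpow_zero N using 2
  rw [hp]
  field_simp
  ring

lemma neg_integral_sub_eq_two_div_mul {α : Type*} [MeasurableSpace α] {μ : Measure α}
    {a b : α → ℝ} (ha : Integrable a μ) (hb : Integrable b μ) {d p : ℝ} (hd : d ≠ 0) (hd₂ : d - 2 ≠ 0)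
    (hp : p = 2 * d / (d - 2)) :
    -∫ x, (a x - b x) ∂μ =
      2 / (d - 2) * ((∫ x, a x ∂μ) - d * ∫ x, (1 / 2 * a x - 1 / p * b x) ∂μ) := by
  rw [integral_sub ha hb, integral_sub (ha.const_mul _) (hb.const_mul _), integral_const_mul,
    integral_const_mul, hp]
  field_simp
  ring

section RightInverse

variable {f e : ℝ → ℝ} {y₀ E₁ : ℝ}

lemma StrictAntiOn.rightInvOn_le_of_apply_le (hf : StrictAntiOn f (Ici y₀))
    (he : MapsTo e (Iic E₁) (Ici y₀)) (hfe : RightInvOn e f (Iic E₁)) {y E : ℝ}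
    (hy : y₀ ≤ y) (hE : E ≤ E₁) (hfy : f y ≤ E) : e E ≤ y := by
  rw [← hf.le_iff_ge hy (he hE), hfe hE]
  exact hfy

lemma lt_of_rightInvOn_of_lt (he : MapsTo e (Iic E₁) (Ici y₀)) (hfe : RightInvOn e f (Iic E₁))
    (hfy₀ : f y₀ = E₁) {E : ℝ} (hE : E < E₁) : y₀ < e E := by
  refine lt_of_le_of_ne (he hE.le) fun h => hE.ne ?_
  rw [← hfe hE.le, ← h, hfy₀]

end RightInverse

/-- Above-threshold trapping: if `E(u) ≤ E₀ < E(W)` and `‖∇u‖² ≥ ‖∇W‖² = N²`,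
then `‖∇u‖² ≥ e(E(u)) ≥ e(E₀) > N²` and `−K(u) ≥ g(E(u)) > 0`, where `e` is the
decreasing inverse of `f(y) = ½y − (1/2*)C^{2*}y^{2*/2}` on `[N²,∞)`,
`g(E) = (2/(d−2))(e(E) − dE)`, and the sharp Sobolev inequality gives
`E(u) ≥ f(‖∇u‖²)`. -/
theorem trapping_above_threshold (d : ℕ) (hd : 3 ≤ d) (N : ℝ) (hN : 0 < N)
    (p C EW E₀ : ℝ) (hp : p = 2 * d / ((d : ℝ) - 2))
    (hC : C = N ^ (-(2 / (d : ℝ)))) (hEW : EW = N ^ 2 / d)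
    (f : ℝ → ℝ) (hf : ∀ y : ℝ, f y = y / 2 - (1 / p) * C ^ p * y ^ (p / 2))
    (e : ℝ → ℝ) (he : ∀ E ∈ Iic EW, e E ∈ Ici (N ^ 2) ∧ f (e E) = E)
    (g : ℝ → ℝ) (hg : ∀ E : ℝ, g E = (2 / ((d : ℝ) - 2)) * (e E - d * E))
    (u : EuclideanSpace ℝ (Fin d) → ℝ)
    (hgrad : Integrable (fun x => ‖fderiv ℝ u x‖ ^ 2) volume)
    (hLp : Integrable (fun x => |u x| ^ p) volume)
    -- the sharp Sobolev inequality, in the form `E(u) ≥ f(‖∇u‖²_{L²})`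
    (hSob : (∫ x, ((1 / 2) * ‖fderiv ℝ u x‖ ^ 2 - (1 / p) * |u x| ^ p)) ≥
      f (∫ x, ‖fderiv ℝ u x‖ ^ 2))
    (hE : (∫ x, ((1 / 2) * ‖fderiv ℝ u x‖ ^ 2 - (1 / p) * |u x| ^ p)) ≤ E₀)
    (hE₀ : E₀ < EW)
    (hbig : (∫ x, ‖fderiv ℝ u x‖ ^ 2) ≥ N ^ 2) :
    (∫ x, ‖fderiv ℝ u x‖ ^ 2) ≥
        e (∫ x, ((1 / 2) * ‖fderiv ℝ u x‖ ^ 2 - (1 / p) * |u x| ^ p)) ∧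
    e (∫ x, ((1 / 2) * ‖fderiv ℝ u x‖ ^ 2 - (1 / p) * |u x| ^ p)) ≥ e E₀ ∧
    e E₀ > N ^ 2 ∧
    -(∫ x, (‖fderiv ℝ u x‖ ^ 2 - |u x| ^ p)) ≥
        g (∫ x, ((1 / 2) * ‖fderiv ℝ u x‖ ^ 2 - (1 / p) * |u x| ^ p)) ∧
    0 < g (∫ x, ((1 / 2) * ‖fderiv ℝ u x‖ ^ 2 - (1 / p) * |u x| ^ p)) := by
  set En := ∫ x, ((1 / 2) * ‖fderiv ℝ u x‖ ^ 2 - (1 / p) * |u x| ^ p)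
  have hd₃ : (3 : ℝ) ≤ d := by exact_mod_cast hd
  have hd₀ : (d : ℝ) ≠ 0 := by positivity
  have hd₂ : 0 < (d : ℝ) - 2 := by linarith
  have hp₂ : 2 < p := by rw [hp, lt_div_iff₀ (by linarith)]; linarith
  have hsharp : C ^ p * (N ^ 2) ^ (p / 2 - 1) = 1 :=
    hC ▸ rpow_neg_two_div_rpow_mul_sq_rpow_eq_one hN hd₀ hd₂.ne' hp
  have hanti : StrictAntiOn f (Ici (N ^ 2)) := by
    rw [funext hf]
    exact strictAntiOn_half_sub_mul_rpow hp₂ (hC ▸ by positivity) (sq_nonneg N) hsharp.ge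
  have hfN : f (N ^ 2) = EW := by
    rw [hf, half_sub_mul_rpow_eq_of_mul_rpow_eq_one (by positivity) hsharp, hEW, hp]
    field_simp
    ring
  have hmaps : MapsTo e (Iic EW) (Ici (N ^ 2)) := fun E hE => (he E hE).1
  have hinv : RightInvOn e f (Iic EW) := fun E hE => (he E hE).2
  have hEn : En ≤ EW := hE.trans hE₀.le
  have heEn : e E₀ ≤ e En :=
    hanti.rightInvOn_le_of_apply_le hmaps hinv (hmaps hEn) hE₀.le (by rw [hinv hEn]; exact hE)
  have hdEn : d * En < N ^ 2 := by
    rw [← lt_div_iff₀' (by positivity), ← hEW]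
    exact hE.trans_lt hE₀
  have heI : e En ≤ ∫ x, ‖fderiv ℝ u x‖ ^ 2 :=
    hanti.rightInvOn_le_of_apply_le hmaps hinv hbig hEn hSob
  refine ⟨heI, heEn, lt_of_rightInvOn_of_lt hmaps hinv hfN hE₀, ?_, ?_⟩
  · rw [neg_integral_sub_eq_two_div_mul hgrad hLp hd₀ hd₂.ne' hp, hg]
    gcongr
  · have hNe : N ^ 2 ≤ e En := hmaps hEn
    rw [hg]
    exact mul_pos (by positivity) (by linarith)
end
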